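/- Define the cache complexity of Strassen by C_S(1) = c₀ and C_S(n) = 7·C_S(n/2) for n a power of 2, and the cache complexity of AtA by C_A(2) = 6·C_S(1) and C_A(n) = 4·C_A(n/2) + 2·C_S(n/2) for n a power of 2 with n ≥ 4, where c₀ > 0. Then C_S(n/2) ≤ C_A(n) ≤ C_S(n) for all powers of 2 n ≥ 2. -/
import Mathlib


theorem ata_cache_complexity (c₀ : ℝ) (hc₀ : 0 < c₀) (CS CA : ℕ → ℝ)
    (hCS1 : CS 1 = c₀)
    (hCS : ∀ k : ℕ, 1 ≤ k → CS (2 ^ k) = 7 * CS (2 ^ (k - 1)))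
    (hCA2 : CA 2 = 6 * CS 1)
    (hCA : ∀ k : ℕ, 2 ≤ k →
      CA (2 ^ k) = 4 * CA (2 ^ (k - 1)) + 2 * CS (2 ^ (k - 1))) :
    ∀ k : ℕ, 1 ≤ k → CS (2 ^ (k - 1)) ≤ CA (2 ^ k) ∧ CA (2 ^ k) ≤ CS (2 ^ k) := by
  have hpos : ∀ k : ℕ, 0 < CS (2 ^ k) := by
    intro k
    induction k with
    | zero => simpa [hCS1] using hc₀
    | succ n ih =>
      rw [hCS (n + 1) (by omega)]
      simp only [Nat.add_sub_cancel]
      linarith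
  intro k hk
  induction k with
  | zero => omega
  | succ n ih =>
    rcases Nat.eq_or_lt_of_le hk with h1 | h1
    · have hn : n = 0 := by omega
      subst hn
      show CS (2 ^ 0) ≤ CA (2 ^ 1) ∧ CA (2 ^ 1) ≤ CS (2 ^ 1)
      rw [hCS 1 le_rfl]
      norm_num [hCA2, hCS1]
      constructor <;> linarith
    · have hn1 : 1 ≤ n := by omega
      obtain ⟨hlo, hhi⟩ := ih hn1
      have hrec := hCA (n + 1) (by omega)
      simp only [Nat.add_sub_cancel] at hrec
      have hCSrec := hCS (n + 1) (by omega)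
      simp only [Nat.add_sub_cancel] at hCSrec ⊢
      have hp1 := hpos n
      have hp2 := hpos (n - 1)
      constructor <;> [skip; rw [hCSrec]] <;> rw [hrec] <;> linarith
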